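/- Properties of P_n: For a nonnegative integer n, define the univariate polynomial P_n(z) = (z − 1)·∏_{i=1}^n (z − 2^i)². Then: (1) for all z ∈ [0,1], P_n(−z) ≤ P_n(z) ≤ 0; (2) for all z ∈ [1, 2^n], 0 ≤ 4·P_n(z) ≤ −P_n(−z); and (3) for all z ≥ 0, −P_n(−z) ≥ 2^{n(n+1)}. -/
import Mathlib


open Finset

/-- The univariate polynomial function `P_n(z) = (z − 1)·∏_{i=1}^n (z − 2^i)²`. -/
noncomputable def Ppoly (n : ℕ) (z : ℝ) : ℝ :=
  (z - 1) * ∏ i ∈ Finset.Icc 1 n, (z - 2 ^ i) ^ 2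

lemma Ppoly_neg (n : ℕ) (z : ℝ) :
    -Ppoly n (-z) = (z + 1) * ∏ i ∈ Finset.Icc 1 n, (z + 2 ^ i) ^ 2 := by
  unfold Ppoly
  rw [show (-z - 1 : ℝ) = -(z + 1) by ring, neg_mul, neg_neg]
  congr 1
  exact Finset.prod_congr rfl fun i _ => by ring

lemma exists_mem_interval (n : ℕ) (hn : 1 ≤ n) (z : ℝ) (h1 : 1 ≤ z) (h2 : z ≤ 2 ^ n) :
    ∃ i ∈ Finset.Icc 1 n, (2 : ℝ) ^ i ≤ 2 * z ∧ z ≤ 2 ^ i := by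
  induction n with
  | zero => omega
  | succ m ih =>
    by_cases hm : 1 ≤ m
    · by_cases hz : z ≤ 2 ^ m
      · obtain ⟨i, hi, h⟩ := ih hm hz
        rw [Finset.mem_Icc] at hi
        exact ⟨i, Finset.mem_Icc.mpr ⟨hi.1, hi.2.trans (Nat.le_succ m)⟩, h⟩
      · push_neg at hz
        refine ⟨m + 1, Finset.mem_Icc.mpr ⟨Nat.le_add_left 1 m, le_rfl⟩, ?_, h2⟩
        rw [pow_succ]
        nlinarith
    · have : m = 0 := by omega
      subst this
      refine ⟨1, Finset.mem_Icc.mpr ⟨le_rfl, le_rfl⟩, ?_, ?_⟩ <;> [nlinarith; simpa using h2]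

/-- Properties of `P_n`: (1) for `z ∈ [0,1]`, `P_n(−z) ≤ P_n(z) ≤ 0`;
(2) for `z ∈ [1, 2^n]`, `0 ≤ 4·P_n(z) ≤ −P_n(−z)`;
(3) for `z ≥ 0`, `−P_n(−z) ≥ 2^{n(n+1)}`. -/
theorem Ppoly_properties (n : ℕ) :
    (∀ z : ℝ, z ∈ Set.Icc (0 : ℝ) 1 → Ppoly n (-z) ≤ Ppoly n z ∧ Ppoly n z ≤ 0) ∧
    (∀ z : ℝ, z ∈ Set.Icc (1 : ℝ) (2 ^ n) →
      0 ≤ 4 * Ppoly n z ∧ 4 * Ppoly n z ≤ -Ppoly n (-z)) ∧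
    (∀ z : ℝ, 0 ≤ z → (2 : ℝ) ^ (n * (n + 1)) ≤ -Ppoly n (-z)) := by
  have prodsq_nonneg : ∀ (z : ℝ), 0 ≤ ∏ i ∈ Finset.Icc 1 n, (z - 2 ^ i) ^ 2 :=
    fun z => Finset.prod_nonneg fun i _ => sq_nonneg _
  have prodplus_nonneg : ∀ (z : ℝ), 0 ≤ ∏ i ∈ Finset.Icc 1 n, (z + 2 ^ i) ^ 2 :=
    fun z => Finset.prod_nonneg fun i _ => sq_nonneg _
  have prod_le : ∀ (z : ℝ), 0 ≤ z →
      ∏ i ∈ Finset.Icc 1 n, (z - 2 ^ i) ^ 2 ≤ ∏ i ∈ Finset.Icc 1 n, (z + 2 ^ i) ^ 2 := by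
    intro z hz
    refine Finset.prod_le_prod (fun i _ => sq_nonneg _) fun i _ => ?_
    have : (0:ℝ) < 2 ^ i := by positivity
    nlinarith
  refine ⟨?_, ?_, ?_⟩
  · rintro z ⟨hz0, hz1⟩
    constructor
    · have h1 : -Ppoly n z ≤ -Ppoly n (-z) := by
        rw [Ppoly_neg]
        have : -Ppoly n z = (1 - z) * ∏ i ∈ Finset.Icc 1 n, (z - 2 ^ i) ^ 2 := by
          unfold Ppoly; ring
        rw [this]
        exact mul_le_mul (by linarith) (prod_le z hz0) (prodsq_nonneg z) (by linarith)
      linarith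
    · exact mul_nonpos_of_nonpos_of_nonneg (by linarith) (prodsq_nonneg z)
  · rintro z ⟨hz1, hz2⟩
    have hz0 : (0:ℝ) ≤ z := by linarith
    rcases Nat.eq_zero_or_pos n with hn | hn
    · subst hn
      simp only [Finset.Icc_eq_empty_of_lt Nat.zero_lt_one, Finset.prod_empty] at *
      unfold Ppoly
      simp only [Finset.Icc_eq_empty_of_lt Nat.zero_lt_one, Finset.prod_empty, mul_one]
      have : z = 1 := le_antisymm (by simpa using hz2) hz1
      subst this
      norm_num
    · obtain ⟨i₀, hi₀, hle, hge⟩ := exists_mem_interval n hn z hz1 hz2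
      constructor
      · have h : (0:ℝ) ≤ (z - 1) * ∏ i ∈ Finset.Icc 1 n, (z - 2 ^ i) ^ 2 :=
          mul_nonneg (by linarith) (prodsq_nonneg z)
        unfold Ppoly
        linarith
      · rw [Ppoly_neg]
        have key : 4 * ∏ i ∈ Finset.Icc 1 n, (z - 2 ^ i) ^ 2 ≤
            ∏ i ∈ Finset.Icc 1 n, (z + 2 ^ i) ^ 2 := by
          rw [← Finset.mul_prod_erase _ _ hi₀, ← Finset.mul_prod_erase _ (fun i => (z + 2 ^ i) ^ 2) hi₀,
            ← mul_assoc]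
          refine mul_le_mul ?_ ?_ (Finset.prod_nonneg fun i _ => sq_nonneg _) (sq_nonneg _)
          · have h2i : (0:ℝ) < 2 ^ i₀ := by positivity
            nlinarith
          · exact Finset.prod_le_prod (fun i _ => sq_nonneg _) fun i _ => by
              have : (0:ℝ) < 2 ^ i := by positivity
              nlinarith
        calc 4 * Ppoly n z = (z - 1) * (4 * ∏ i ∈ Finset.Icc 1 n, (z - 2 ^ i) ^ 2) := by
              unfold Ppoly; ring
          _ ≤ (z + 1) * ∏ i ∈ Finset.Icc 1 n, (z + 2 ^ i) ^ 2 := by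
              refine mul_le_mul (by linarith) key (by positivity) (by linarith)
  · intro z hz
    rw [Ppoly_neg]
    have hsum : ∑ i ∈ Finset.Icc 1 n, 2 * i = n * (n + 1) := by
      have hIcc : ∑ i ∈ Finset.Icc 1 n, i = ∑ i ∈ Finset.range (n + 1), i := by
        rw [← Finset.Ico_add_one_right_eq_Icc, Finset.sum_Ico_eq_sum_range, Finset.sum_range_succ']
        simp [Nat.add_comm]
      have hg := Finset.sum_range_id_mul_two (n + 1)
      simp only [Nat.add_sub_cancel] at hg
      rw [← Finset.mul_sum, hIcc, Nat.mul_comm 2 _, hg]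
      exact Nat.mul_comm _ _
    have hprod : ∏ i ∈ Finset.Icc 1 n, ((2:ℝ) ^ i) ^ 2 = 2 ^ (n * (n + 1)) := by
      rw [← hsum]
      rw [← Finset.prod_pow_eq_pow_sum]
      exact Finset.prod_congr rfl fun i _ => by rw [← pow_mul, mul_comm]
    calc (2:ℝ) ^ (n * (n + 1)) = 1 * ∏ i ∈ Finset.Icc 1 n, ((2:ℝ) ^ i) ^ 2 := by rw [hprod, one_mul]
      _ ≤ (z + 1) * ∏ i ∈ Finset.Icc 1 n, (z + 2 ^ i) ^ 2 := by
          refine mul_le_mul (by linarith) ?_ (Finset.prod_nonneg fun i _ => sq_nonneg _) (by linarith)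
          refine Finset.prod_le_prod (fun i _ => sq_nonneg _) fun i _ => ?_
          have : (0:ℝ) < 2 ^ i := by positivity
          nlinarith
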